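/- Let G be a finite simple graph on n vertices, let H and H° be its closed and open neighborhood hypergraphs, and let δ** = min{δ̌(H), δ̌(H°)}. Then for every integer j with 0 ≤ j ≤ γ^LD(G), one has (δ** + 1)·γ^LD(G) ≥ n + δ**·j − T[H,j]; equivalently, γ^LD(G) ≥ (n + δ**·j − T[H,j])/(δ** + 1). -/

import Mathlib

open Finset

variable {V : Type*}

/-- Degree of a vertex `x` in a hypergraph with edge set `F`:
the number of edges containing `x`. -/
def hdeg [DecidableEq V] (F : Finset (Finset V)) (x : V) : ℕ :=
  (F.filter fun e => x ∈ e).card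

/-- Minimum degree over the vertex set `S` of a hypergraph with edge set `F`
(`0` if `S` is empty). -/
def hminDeg [DecidableEq V] (F : Finset (Finset V)) (S : Finset V) : ℕ :=
  if h : S.Nonempty then S.inf' h (hdeg F) else 0

/-- Edge set of the restriction `H[S]`: the distinct traces `e ∩ S` of edges. -/
def hrestrict [DecidableEq V] (E : Finset (Finset V)) (S : Finset V) : Finset (Finset V) :=
  E.image fun e => e ∩ S

/-- Edge set of the pseudo induced subhypergraph on `S`: edges contained in `S`. -/
def hpseudo [DecidableEq V] (E : Finset (Finset V)) (S : Finset V) : Finset (Finset V) :=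
  E.filter fun e => e ⊆ S

/-- Degeneracy of the hypergraph with vertex set `W` and edge set `E`:
the largest minimum degree of an induced subhypergraph. -/
def degenOn [DecidableEq V] (E : Finset (Finset V)) (W : Finset V) : ℕ :=
  W.powerset.sup fun S => hminDeg (hrestrict E S) S

/-- Pseudo degeneracy of the hypergraph with vertex set `W` and edge set `E`. -/
def pdegenOn [DecidableEq V] (E : Finset (Finset V)) (W : Finset V) : ℕ :=
  W.powerset.sup fun S => hminDeg (hpseudo E S) S

/-- Reduced degeneracy of the hypergraph with vertex set `W` and edge set `E`:
the largest pseudo degeneracy of an induced subhypergraph. -/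
def rdegenOn [DecidableEq V] (E : Finset (Finset V)) (W : Finset V) : ℕ :=
  W.powerset.sup fun S => pdegenOn (hrestrict E S) S

def degen [DecidableEq V] [Fintype V] (E : Finset (Finset V)) : ℕ := degenOn E univ
def pdegen [DecidableEq V] [Fintype V] (E : Finset (Finset V)) : ℕ := pdegenOn E univ
def rdegen [DecidableEq V] [Fintype V] (E : Finset (Finset V)) : ℕ := rdegenOn E univ

/-- The distinct nonempty traces of the edges `E` on the set `S`. -/
def ntraces [DecidableEq V] (E : Finset (Finset V)) (S : Finset V) : Finset (Finset V) :=
  (hrestrict E S).erase ∅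

/-- The trace function `T[H,k]`: the largest number of distinct nonempty traces
of `E` on a `k`-element vertex subset. -/
def traceFn [DecidableEq V] [Fintype V] (E : Finset (Finset V)) (k : ℕ) : ℕ :=
  (univ.powerset.filter fun S : Finset V => S.card = k).sup fun S => (ntraces E S).card

/-- The edge set of the closed neighborhood hypergraph of a graph `G`:
the distinct closed neighborhoods `N[x]`. -/
def closedNH [DecidableEq V] [Fintype V] (G : SimpleGraph V) [DecidableRel G.Adj] :
    Finset (Finset V) :=
  univ.image fun x => insert x (G.neighborFinset x)

/-- The edge set of the open neighborhood hypergraph of a graph `G`: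
the distinct open neighborhoods `N(x)`. -/
def openNH [DecidableEq V] [Fintype V] (G : SimpleGraph V) [DecidableRel G.Adj] :
    Finset (Finset V) :=
  univ.image fun x => G.neighborFinset x

/-- `D` is a locating-dominating set of `G`: it is dominating, and distinct
vertices outside `D` have distinct open neighborhood traces on `D`. -/
def IsLD [DecidableEq V] [Fintype V] (G : SimpleGraph V) [DecidableRel G.Adj]
    (D : Finset V) : Prop :=
  (∀ x : V, ((insert x (G.neighborFinset x)) ∩ D).Nonempty) ∧
  ∀ x ∉ D, ∀ y ∉ D, x ≠ y → G.neighborFinset x ∩ D ≠ G.neighborFinset y ∩ D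

/-- The location-domination number `γ^LD(G)`. -/
noncomputable def gammaLD [DecidableEq V] [Fintype V] (G : SimpleGraph V)
    [DecidableRel G.Adj] : ℕ :=
  sInf {k | ∃ D : Finset V, IsLD G D ∧ D.card = k}

/-! Let `D` be a minimum locating-dominating set. The `n - γ` vertices outside `D` leave
pairwise distinct nonempty traces on `D`, and these traces form a subhypergraph of both `H[D]`
and `H°[D]`. By reduced degeneracy, every nonempty `S` has a vertex lying in at most `δ**` of
the outside traces on `S`; deleting such vertices `γ - j` times leaves a `j`-set `T` with
`n - γ ≤ T[H,j] + δ**·(γ - j)`. -/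

section Hypergraph

variable [DecidableEq V]

lemma hdeg_mono {F F' : Finset (Finset V)} (h : F ⊆ F') (x : V) : hdeg F x ≤ hdeg F' x :=
  card_le_card (filter_subset_filter _ h)

lemma hpseudo_hrestrict_self (E : Finset (Finset V)) (S : Finset V) :
    hpseudo (hrestrict E S) S = hrestrict E S :=
  filter_true_of_mem fun _ he => by
    obtain ⟨f, -, rfl⟩ := mem_image.mp he
    exact inter_subset_right

lemma exists_hdeg_hrestrict_le_rdegenOn (E : Finset (Finset V)) {S W : Finset V}
    (hSW : S ⊆ W) (hS : S.Nonempty) : ∃ v ∈ S, hdeg (hrestrict E S) v ≤ rdegenOn E W := by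
  obtain ⟨v, hv, hmin⟩ := exists_mem_eq_inf' hS (hdeg (hrestrict E S))
  refine ⟨v, hv, ?_⟩
  calc hdeg (hrestrict E S) v
      = hminDeg (hpseudo (hrestrict E S) S) S := by
        rw [hpseudo_hrestrict_self, hminDeg, dif_pos hS, hmin]
    _ ≤ pdegenOn (hrestrict E S) S :=
        le_sup (f := fun T => hminDeg (hpseudo (hrestrict E S) T) T) (mem_powerset_self S)
    _ ≤ rdegenOn E W := le_sup (f := fun T => pdegenOn (hrestrict E T) T) (mem_powerset.mpr hSW)

lemma exists_card_eq_le_add_mul {f : Finset V → ℕ} {d : ℕ}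
    (hf : ∀ S : Finset V, S.Nonempty → ∃ v ∈ S, f S ≤ f (S.erase v) + d)
    {j : ℕ} : ∀ S : Finset V, j ≤ S.card →
      ∃ T : Finset V, T.card = j ∧ f S ≤ f T + d * (S.card - j) := by
  suffices ∀ k, ∀ S : Finset V, S.card = j + k →
      ∃ T : Finset V, T.card = j ∧ f S ≤ f T + d * k by
    intro S hS
    exact this _ S (by omega)
  intro k
  induction k with
  | zero => exact fun S hS => ⟨S, hS, by simp⟩
  | succ k ih =>
    intro S hS
    obtain ⟨v, hv, hfv⟩ := hf S (card_pos.mp (by omega))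
    obtain ⟨T, hT, hfT⟩ := ih (S.erase v) (by rw [card_erase_of_mem hv]; omega)
    exact ⟨T, hT, by rw [mul_add_one]; omega⟩

end Hypergraph

section Graph

variable [DecidableEq V] [Fintype V] (G : SimpleGraph V) [DecidableRel G.Adj]

-- For `x ∉ S` these are also the traces `N[x] ∩ S` of the closed neighborhoods.
def outsideTraces (S : Finset V) : Finset (Finset V) :=
  ((univ \ S).image fun x => G.neighborFinset x ∩ S).erase ∅

variable {G}

lemma mem_outsideTraces {S A : Finset V} :
    A ∈ outsideTraces G S ↔ A ≠ ∅ ∧ ∃ x ∉ S, G.neighborFinset x ∩ S = A := by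
  simp [outsideTraces]

variable (G)

lemma outsideTraces_subset_hrestrict_closedNH (S : Finset V) :
    outsideTraces G S ⊆ hrestrict (closedNH G) S := by
  intro A hA
  obtain ⟨-, x, hxS, rfl⟩ := mem_outsideTraces.mp hA
  exact mem_image.mpr ⟨_, mem_image_of_mem _ (mem_univ x), insert_inter_of_notMem hxS⟩

lemma outsideTraces_subset_hrestrict_openNH (S : Finset V) :
    outsideTraces G S ⊆ hrestrict (openNH G) S := by
  intro A hA
  obtain ⟨-, x, -, rfl⟩ := mem_outsideTraces.mp hA
  exact mem_image.mpr ⟨_, mem_image_of_mem _ (mem_univ x), rfl⟩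

lemma outsideTraces_subset_ntraces_closedNH (S : Finset V) :
    outsideTraces G S ⊆ ntraces (closedNH G) S := fun _ hA =>
  mem_erase.mpr ⟨(mem_outsideTraces.mp hA).1, outsideTraces_subset_hrestrict_closedNH G S hA⟩

lemma card_outsideTraces_le_traceFn {S : Finset V} {j : ℕ} (hS : S.card = j) :
    (outsideTraces G S).card ≤ traceFn (closedNH G) j :=
  (card_le_card (outsideTraces_subset_ntraces_closedNH G S)).trans <|
    le_sup (f := fun S => (ntraces (closedNH G) S).card)
      (mem_filter.mpr ⟨mem_powerset.mpr (subset_univ S), hS⟩)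

lemma filter_notMem_outsideTraces_subset (S : Finset V) (v : V) :
    (outsideTraces G S).filter (v ∉ ·) ⊆ outsideTraces G (S.erase v) := by
  intro A hA
  obtain ⟨hA, hvA⟩ := mem_filter.mp hA
  obtain ⟨hA0, x, hxS, rfl⟩ := mem_outsideTraces.mp hA
  refine mem_outsideTraces.mpr ⟨hA0, x, fun hx => hxS (mem_of_mem_erase hx), ?_⟩
  rw [inter_erase, erase_eq_of_notMem hvA]

lemma card_outsideTraces_le_erase_add_hdeg (S : Finset V) (v : V) :
    (outsideTraces G S).card ≤
      (outsideTraces G (S.erase v)).card + hdeg (outsideTraces G S) v := by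
  rw [← card_filter_add_card_filter_not (s := outsideTraces G S) (v ∈ ·), add_comm]
  exact Nat.add_le_add_right (card_le_card (filter_notMem_outsideTraces_subset G S v)) _

lemma exists_mem_card_outsideTraces_le {S : Finset V} (hS : S.Nonempty) :
    ∃ v ∈ S, (outsideTraces G S).card ≤
      (outsideTraces G (S.erase v)).card + min (rdegen (closedNH G)) (rdegen (openNH G)) := by
  have key : ∀ E, outsideTraces G S ⊆ hrestrict E S →
      ∃ v ∈ S, (outsideTraces G S).card ≤ (outsideTraces G (S.erase v)).card + rdegen E := by
    intro E hE
    obtain ⟨v, hv, hvE⟩ := exists_hdeg_hrestrict_le_rdegenOn E (subset_univ S) hS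
    exact ⟨v, hv, (card_outsideTraces_le_erase_add_hdeg G S v).trans <|
      Nat.add_le_add_left ((hdeg_mono hE v).trans hvE) _⟩
  rcases min_choice (rdegen (closedNH G)) (rdegen (openNH G)) with h | h <;> rw [h]
  · exact key _ (outsideTraces_subset_hrestrict_closedNH G S)
  · exact key _ (outsideTraces_subset_hrestrict_openNH G S)

-- Vertices outside `D` have pairwise distinct, nonempty traces on `D`.
lemma IsLD.card_outsideTraces_add_card {D : Finset V} (hD : IsLD G D) :
    (outsideTraces G D).card + D.card = Fintype.card V := by
  have hinj : Set.InjOn (fun x => G.neighborFinset x ∩ D) ↑(univ \ D) := fun x hx y hy hxy => by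
    by_contra hne
    exact hD.2 x (mem_sdiff.mp hx).2 y (mem_sdiff.mp hy).2 hne hxy
  have hne : ∅ ∉ (univ \ D).image fun x => G.neighborFinset x ∩ D := by
    intro h
    obtain ⟨x, hx, hx0⟩ := mem_image.mp h
    simpa [insert_inter_of_notMem (mem_sdiff.mp hx).2, hx0] using hD.1 x
  rw [outsideTraces, erase_eq_of_notMem hne, card_image_of_injOn hinj,
    card_sdiff_add_card_eq_card (subset_univ D), card_univ]

lemma isLD_univ : IsLD G univ :=
  ⟨fun x => ⟨x, by simp⟩, fun x hx => absurd (mem_univ x) hx⟩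

lemma exists_isLD_card_eq_gammaLD : ∃ D : Finset V, IsLD G D ∧ D.card = gammaLD G :=
  Nat.sInf_mem (s := {k | ∃ D : Finset V, IsLD G D ∧ D.card = k})
    ⟨_, univ, isLD_univ G, rfl⟩

end Graph

/-- with `H`, `H°` the closed and open neighborhood hypergraphs of an
`n`-vertex graph `G` and `δ** = min{δ̌(H), δ̌(H°)}`, for every `0 ≤ j ≤ γ^LD(G)` one
has `(δ** + 1)·γ^LD(G) ≥ n + δ**·j − T[H,j]`, i.e.
`γ^LD(G) ≥ (n + δ**·j − T[H,j])/(δ** + 1)`. -/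
theorem stmt10 [DecidableEq V] [Fintype V] (G : SimpleGraph V) [DecidableRel G.Adj] :
    ∀ j : ℕ, j ≤ gammaLD G →
      Fintype.card V + min (rdegen (closedNH G)) (rdegen (openNH G)) * j ≤
        (min (rdegen (closedNH G)) (rdegen (openNH G)) + 1) * gammaLD G +
          traceFn (closedNH G) j := by
  intro j hj
  obtain ⟨D, hD, hDγ⟩ := exists_isLD_card_eq_gammaLD G
  obtain ⟨T, hTj, hDT⟩ := exists_card_eq_le_add_mul
    (fun S hS => exists_mem_card_outsideTraces_le G hS) D (hDγ ▸ hj)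
  have hn := hD.card_outsideTraces_add_card
  have hT := card_outsideTraces_le_traceFn G hTj
  set δ := min (rdegen (closedNH G)) (rdegen (openNH G))
  have hsplit : δ * (gammaLD G - j) + δ * j = δ * gammaLD G := by
    rw [← mul_add, Nat.sub_add_cancel hj]
  rw [hDγ] at hDT hn
  linarith
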